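/- A compact metrizable space is a Banach fractal if and only if it is homeomorphic to the attractor of an iterated function system consisting of Banach contractions on a complete metric space. -/
import Mathlib


open Set

/-- `d` is a metric on `X` generating its topology. -/
def CompatMetric {X : Type} [TopologicalSpace X] (d : X → X → ℝ) : Prop :=
  (∀ x y : X, d x y = 0 ↔ x = y) ∧ (∀ x y : X, d x y = d y x) ∧
  (∀ x y z : X, d x z ≤ d x y + d y z) ∧
  (∀ S : Set X, IsOpen S ↔ ∀ x ∈ S, ∃ ε > 0, {y : X | d x y < ε} ⊆ S)

/-- `d` is an ultrametric on `X` generating its topology. -/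
def CompatUltrametric {X : Type} [TopologicalSpace X] (d : X → X → ℝ) : Prop :=
  (∀ x y : X, d x y = 0 ↔ x = y) ∧ (∀ x y : X, d x y = d y x) ∧
  (∀ x y z : X, d x z ≤ max (d x y) (d y z)) ∧
  (∀ S : Set X, IsOpen S ↔ ∀ x ∈ S, ∃ ε > 0, {y : X | d x y < ε} ⊆ S)

/-- A finite family `F` of self-maps of `X` is topologically contracting. -/
def TopContracting {X : Type} [TopologicalSpace X] (F : Set (X → X)) : Prop :=
  ∀ U : Set (Set X), (∀ u ∈ U, IsOpen u) → ⋃₀ U = Set.univ →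
    ∃ n : ℕ, 0 < n ∧ ∀ g : Fin n → (X → X), (∀ i, g i ∈ F) →
      ∃ u ∈ U, Set.range (List.foldr (· ∘ ·) id (List.ofFn g)) ⊆ u

/-- `X` is a topological fractal. -/
def IsTopFractal (X : Type) [TopologicalSpace X] : Prop :=
  ∃ F : Set (X → X), F.Finite ∧ (∀ f ∈ F, Continuous f) ∧
    (⋃ f ∈ F, Set.range f) = Set.univ ∧ TopContracting F

/-- `X` is a Banach fractal: it is covered by the images of a finite family of self-maps
having Lipschitz constant `< 1` with respect to some compatible metric. -/
def IsBanachFractal (X : Type) [TopologicalSpace X] : Prop :=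
  ∃ d : X → X → ℝ, CompatMetric d ∧
    ∃ F : Set (X → X), F.Finite ∧ (⋃ f ∈ F, Set.range f) = Set.univ ∧
      ∀ f ∈ F, ∃ L : ℝ, L < 1 ∧ ∀ x y : X, d (f x) (f y) ≤ L * d x y

/-- `X` is a Banach ultrafractal: it is covered by the pairwise disjoint images of a
finite family `F` of continuous self-maps such that for each `ε > 0` there is a
compatible ultrametric with respect to which `sup_{f ∈ F} Lip(f) < ε`. -/
def IsBanachUltrafractal (X : Type) [TopologicalSpace X] : Prop :=
  ∃ F : Set (X → X), F.Finite ∧ (∀ f ∈ F, Continuous f) ∧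
    (⋃ f ∈ F, Set.range f) = Set.univ ∧
    (F.Pairwise fun f g => Disjoint (Set.range f) (Set.range g)) ∧
    ∀ ε : ℝ, 0 < ε → ∃ d : X → X → ℝ, CompatUltrametric d ∧
      ∃ L : ℝ, L < ε ∧ ∀ f ∈ F, ∀ x y : X, d (f x) (f y) ≤ L * d x y

theorem stmt18' {X : Type} [TopologicalSpace X] [CompactSpace X]
    [TopologicalSpace.MetrizableSpace X] [Nonempty X] :
    (∃ d : X → X → ℝ, CompatMetric d ∧
    ∃ F : Set (X → X), F.Finite ∧ (⋃ f ∈ F, Set.range f) = Set.univ ∧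
      ∀ f ∈ F, ∃ L : ℝ, L < 1 ∧ ∀ x y : X, d (f x) (f y) ≤ L * d x y) ↔
      ∃ (Y : Type) (_ : MetricSpace Y), CompleteSpace Y ∧
        ∃ F : Set (Y → Y), F.Finite ∧
          (∀ f ∈ F, ∃ K : NNReal, K < 1 ∧ LipschitzWith K f) ∧
          ∃ A : Set Y, A.Nonempty ∧ IsCompact A ∧ (A = ⋃ f ∈ F, f '' A) ∧
            Nonempty (X ≃ₜ A) := by
  constructor
  · rintro ⟨d, ⟨hd0, hdc, hdt, hdo⟩, F, hFfin, hFcov, hFlip⟩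
    letI m : MetricSpace X := MetricSpace.ofDistTopology d
      (fun x => (hd0 x x).2 rfl) hdc hdt
      (fun s => (hdo s).trans (by simp [Set.subset_def]))
      (fun x y h => (hd0 x y).1 h)
    haveI : CompactSpace X := ‹CompactSpace X›
    refine ⟨X, m, complete_of_compact, F, hFfin, ?_, Set.univ, univ_nonempty,
      isCompact_univ, ?_, ⟨(Homeomorph.Set.univ X).symm⟩⟩
    · intro f hf
      obtain ⟨L, hL1, hL⟩ := hFlip f hf
      refine ⟨⟨max L 0, le_max_right _ _⟩, ?_, ?_⟩
      · exact_mod_cast max_lt hL1 one_pos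
      · refine LipschitzWith.of_dist_le_mul fun x y => ?_
        calc dist (f x) (f y) ≤ L * dist x y := hL x y
        _ ≤ max L 0 * dist x y := by
            exact mul_le_mul_of_nonneg_right (le_max_left _ _) dist_nonneg
    · simpa [Set.image_univ] using hFcov.symm
  · rintro ⟨Y, mY, hcY, F, hFfin, hFlip, A, hAne, hAcomp, hAeq, ⟨e⟩⟩
    have hsub : ∀ f ∈ F, ∀ a ∈ A, f a ∈ A := by
      intro f hf a ha
      rw [hAeq]
      exact Set.mem_biUnion hf ⟨a, ha, rfl⟩
    classical
    set φ : (Y → Y) → (X → X) := fun f x =>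
      if h : f ↑(e x) ∈ A then e.symm ⟨f ↑(e x), h⟩ else x with hφ
    have hφ' : ∀ f ∈ F, ∀ x, (↑(e (φ f x)) : Y) = f ↑(e x) := by
      intro f hf x
      have h : f ↑(e x) ∈ A := hsub f hf _ (e x).2
      simp [hφ, h]
    refine ⟨fun x y => dist (e x) (e y), ⟨?_, fun x y => dist_comm _ _,
      fun x y z => dist_triangle _ _ _, ?_⟩, φ '' F, hFfin.image φ, ?_, ?_⟩
    · intro x y
      rw [dist_eq_zero]
      exact ⟨fun h => e.injective h, fun h => h ▸ rfl⟩
    · intro S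
      rw [← e.isOpen_image, Metric.isOpen_iff]
      constructor
      · intro h x hx
        obtain ⟨ε, hε, hb⟩ := h (e x) ⟨x, hx, rfl⟩
        refine ⟨ε, hε, fun y hy => ?_⟩
        have : e y ∈ e '' S := hb (by simpa [Metric.mem_ball, dist_comm] using hy)
        obtain ⟨z, hz, hez⟩ := this
        exact e.injective hez ▸ hz
      · rintro h a ⟨x, hx, rfl⟩
        obtain ⟨ε, hε, hb⟩ := h x hx
        refine ⟨ε, hε, fun b hb' => ?_⟩
        have : e.symm b ∈ S := hb (by
          show dist (e x) (e (e.symm b)) < ε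
          simpa [Metric.mem_ball, dist_comm] using hb')
        exact ⟨e.symm b, this, by simp⟩
    · ext x
      simp only [Set.mem_iUnion, Set.mem_univ, iff_true]
      have h2 : (↑(e x) : Y) ∈ ⋃ f ∈ F, f '' A := hAeq.le (e x).2
      simp only [Set.mem_iUnion] at h2
      obtain ⟨f, hf, a, ha, hfa⟩ := h2
      refine ⟨φ f, Set.mem_image_of_mem φ hf, e.symm ⟨a, ha⟩, ?_⟩
      apply e.injective
      apply Subtype.ext
      rw [hφ' f hf]
      simp [hfa]
    · rintro g ⟨f, hf, rfl⟩
      obtain ⟨K, hK1, hK⟩ := hFlip f hf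
      refine ⟨K, by exact_mod_cast hK1, fun x y => ?_⟩
      have h1 : dist (e (φ f x)) (e (φ f y)) = dist (f ↑(e x)) (f ↑(e y)) := by
        rw [Subtype.dist_eq, hφ' f hf, hφ' f hf]
      show dist (e (φ f x)) (e (φ f y)) ≤ ↑K * dist (e x) (e y)
      rw [h1]
      have := hK.dist_le_mul ↑(e x) ↑(e y)
      simpa [Subtype.dist_eq] using this

/-- A (nonempty) compact metrizable space is a Banach fractal iff it is homeomorphic to
the attractor of an IFS consisting of Banach contractions on a complete metric space. -/
theorem stmt18 {X : Type} [TopologicalSpace X] [CompactSpace X]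
    [TopologicalSpace.MetrizableSpace X] [Nonempty X] :
    IsBanachFractal X ↔
      ∃ (Y : Type) (_ : MetricSpace Y), CompleteSpace Y ∧
        ∃ F : Set (Y → Y), F.Finite ∧
          (∀ f ∈ F, ∃ K : NNReal, K < 1 ∧ LipschitzWith K f) ∧
          ∃ A : Set Y, A.Nonempty ∧ IsCompact A ∧ (A = ⋃ f ∈ F, f '' A) ∧
            Nonempty (X ≃ₜ A) := stmt18'
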